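/- arXiv:2412.15419 — 5 statements merged into one kernel-verified Lean document; each statement's English description precedes it below -/
import Mathlib

section
/- Let K ⊆ K' be finite simplicial complexes with K' = K ∪ {σ} for a single p-simplex σ, and suppose σ is negative (dim H_{p-1} decreases by 1). Then the p-th harmonic chain groups are equal: Z_p(K) ∩ Z^p(K) = Z_p(K') ∩ Z^p(K'). -/
/-- Dimension of the homology group `Z/B`, computed as `Z` modulo the part of `B` inside `Z`. -/
noncomputable def homologyDim {V : Type*} [AddCommGroup V] [Module ℝ V]
    (Z B : Submodule ℝ V) : ℕ :=
  Module.finrank ℝ (Z ⧸ (Submodule.comap Z.subtype B))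

/-!
If some `p`-cycle `z` of `K'` had a nonzero `σ`-coordinate, then `σ` would be congruent modulo
the cycle `z` to a chain of `K` (a chain orthogonal to `σ`), so `∂σ` would already be a boundary
in `K` and adding `σ` would not kill any homology class, contradicting negativity. Hence every
`p`-cycle of `K'` is orthogonal to `σ`, which makes the extra condition `⊥ σ` in the harmonic
chains of `K` automatic.
-/

namespace LinearMap

variable {K V W : Type*} [Field K] [AddCommGroup V] [Module K V] [AddCommGroup W] [Module K W]

theorem map_ker_eq_range_of_not_ker_le (f : V →ₗ[K] W) (φ : V →ₗ[K] K)
    (h : ¬ ker f ≤ ker φ) : (ker φ).map f = range f := by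
  obtain ⟨v, hv, hφv⟩ := SetLike.not_le_iff_exists.mp h
  have hsup : ker φ ⊔ ker f = ⊤ := by
    rw [eq_top_iff, ← span_singleton_sup_ker_eq_top φ hφv, sup_comm]
    exact sup_le_sup_left ((Submodule.span_singleton_le_iff_mem _ _).mpr hv) _
  have hker : (ker f).map f ≤ (ker φ).map f :=
    Submodule.map_le_iff_le_comap.mpr (ker_le_comap _)
  rw [← Submodule.map_top, ← hsup, Submodule.map_sup, sup_of_le_left hker]

end LinearMap

theorem Submodule.orthogonal_span_singleton_eq_ker_innerSL {𝕜 E : Type*} [RCLike 𝕜]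
    [NormedAddCommGroup E] [InnerProductSpace 𝕜 E] (v : E) :
    (𝕜 ∙ v)ᗮ = LinearMap.ker (innerSL 𝕜 v).toLinearMap := by
  ext x
  simp [Submodule.mem_orthogonal_singleton_iff_inner_right]

theorem stmt9_general
    {C2 C1 C0 Cm : Type*}
    [NormedAddCommGroup C2] [InnerProductSpace ℝ C2]
    [NormedAddCommGroup C1] [InnerProductSpace ℝ C1]
    [NormedAddCommGroup C0] [InnerProductSpace ℝ C0]
    [NormedAddCommGroup Cm] [InnerProductSpace ℝ Cm]
    (d2 : C2 →ₗ[ℝ] C1) (d1 : C1 →ₗ[ℝ] C0) (d0 : C0 →ₗ[ℝ] Cm)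
    (σ : C1)
    (hneg : homologyDim (LinearMap.ker d0) (Submodule.map d1 (ℝ ∙ σ)ᗮ) =
      homologyDim (LinearMap.ker d0) (LinearMap.range d1) + 1) :
    LinearMap.ker d1 ⊓ (LinearMap.range d2)ᗮ ⊓ (ℝ ∙ σ)ᗮ =
      LinearMap.ker d1 ⊓ (LinearMap.range d2)ᗮ := by
  have hcycles : LinearMap.ker d1 ≤ (ℝ ∙ σ)ᗮ := by
    by_contra h
    rw [Submodule.orthogonal_span_singleton_eq_ker_innerSL] at h hneg
    rw [LinearMap.map_ker_eq_range_of_not_ker_le d1 _ h] at hneg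
    omega
  exact inf_eq_left.mpr (inf_le_left.trans hcycles)

/-- Let `K' = K ∪ {σ}` for a single negative `p`-simplex `σ`
(`dim H_{p-1}` decreases by 1).  Then the `p`-th harmonic chain groups of `K` and `K'`
are equal: `Z_p(K) ∩ Z^p(K) = Z_p(K') ∩ Z^p(K')`.  Model as before:
`har_p(K) = ker d1 ⊓ (range d2)ᗮ ⊓ (ℝ∙σ)ᗮ`, `har_p(K') = ker d1 ⊓ (range d2)ᗮ`. -/
theorem stmt9
    {C2 C1 C0 Cm : Type*}
    [NormedAddCommGroup C2] [InnerProductSpace ℝ C2] [FiniteDimensional ℝ C2]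
    [NormedAddCommGroup C1] [InnerProductSpace ℝ C1] [FiniteDimensional ℝ C1]
    [NormedAddCommGroup C0] [InnerProductSpace ℝ C0] [FiniteDimensional ℝ C0]
    [NormedAddCommGroup Cm] [InnerProductSpace ℝ Cm] [FiniteDimensional ℝ Cm]
    (d2 : C2 →ₗ[ℝ] C1) (d1 : C1 →ₗ[ℝ] C0) (d0 : C0 →ₗ[ℝ] Cm)
    (hdd1 : d1 ∘ₗ d2 = 0) (hdd0 : d0 ∘ₗ d1 = 0)
    (σ : C1) (hσ : σ ≠ 0)
    (hcoface : LinearMap.range d2 ≤ (ℝ ∙ σ)ᗮ)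
    (hneg : homologyDim (LinearMap.ker d0) (Submodule.map d1 (ℝ ∙ σ)ᗮ) =
      homologyDim (LinearMap.ker d0) (LinearMap.range d1) + 1) :
    LinearMap.ker d1 ⊓ (LinearMap.range d2)ᗮ ⊓ (ℝ ∙ σ)ᗮ =
      LinearMap.ker d1 ⊓ (LinearMap.range d2)ᗮ :=
  stmt9_general d2 d1 d0 σ hneg
end

section
/- Let K ⊆ K' be finite simplicial complexes with K' = K ∪ {σ} for a single p-simplex σ. If σ is positive (dim H_p increases), then dim B^p(K') = dim B^p(K), where B^p = im(δ^{p-1}) is the p-coboundary group. If σ is negative (dim H_{p-1} decreases), then dim B^p(K') = dim B^p(K) + 1 and dim Z^{p-1}(K') = dim Z^{p-1}(K) − 1. -/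
/-!
The rank of `P ∘ d₁*`, with `P` the orthogonal projection onto the hyperplane `W = σᗮ`, equals
that of its adjoint `d₁ ∘ P`, i.e. `dim d₁(W)`, while `d₁*` has rank `rank d₁`. Counting cycles
and boundaries turns a positive `σ` into `dim (ker d₁ ∩ W) = dim ker d₁ - 1`, which by
rank–nullity on `W` means `dim d₁(W) = rank d₁`, and a negative `σ` into
`dim d₁(W) = rank d₁ - 1`. The claim on `Z^{p-1}` is then rank–nullity for the two coboundaries.
-/

open Module LinearMap

theorem Submodule.finrank_comap_subtype {R M : Type*} [Ring R] [AddCommGroup M] [Module R M]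
    (W X : Submodule R M) : finrank R (X.comap W.subtype) = finrank R ↥(W ⊓ X) := by
  rw [← W.finrank_map_subtype_eq, Submodule.map_comap_subtype]

section homologyDim

variable {V : Type*} [AddCommGroup V] [Module ℝ V] [FiniteDimensional ℝ V]

theorem homologyDim_add_finrank {Z B : Submodule ℝ V} (h : B ≤ Z) :
    homologyDim Z B + finrank ℝ B = finrank ℝ Z := by
  rw [homologyDim, ← (B.comap Z.subtype).finrank_quotient_add_finrank,
    Submodule.finrank_comap_subtype, inf_eq_right.mpr h]

theorem finrank_cycles_eq_add_of_homologyDim_eq_add {Z Z' B : Submodule ℝ V} {n : ℕ}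
    (hZ : B ≤ Z) (hZ' : B ≤ Z') (h : homologyDim Z B = homologyDim Z' B + n) :
    finrank ℝ Z = finrank ℝ Z' + n := by
  have := homologyDim_add_finrank hZ
  have := homologyDim_add_finrank hZ'
  omega

theorem finrank_boundaries_eq_add_of_homologyDim_eq_add {Z B B' : Submodule ℝ V} {n : ℕ}
    (hB : B ≤ Z) (hB' : B' ≤ Z) (h : homologyDim Z B' = homologyDim Z B + n) :
    finrank ℝ B = finrank ℝ B' + n := by
  have := homologyDim_add_finrank hB
  have := homologyDim_add_finrank hB'
  omega

end homologyDim

section RankNullity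

variable {K V V' : Type*} [DivisionRing K] [AddCommGroup V] [Module K V] [FiniteDimensional K V]
  [AddCommGroup V'] [Module K V']

theorem LinearMap.finrank_inf_ker_add_finrank_map (f : V →ₗ[K] V') (W : Submodule K V) :
    finrank K ↥(W ⊓ ker f) + finrank K (W.map f) = finrank K W := by
  rw [← (f.domRestrict W).finrank_range_add_finrank_ker, range_domRestrict, ker_domRestrict,
    Submodule.finrank_comap_subtype, add_comm]

theorem LinearMap.finrank_map_eq_finrank_range_of_finrank_ker_eq_succ (f : V →ₗ[K] V')
    {W : Submodule K V} (hW : finrank K V ≤ finrank K W + 1)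
    (h : finrank K (ker f) = finrank K ↥(ker f ⊓ W) + 1) :
    finrank K (W.map f) = finrank K (range f) := by
  refine le_antisymm (Submodule.finrank_mono (map_le_range)) ?_
  have := f.finrank_range_add_finrank_ker
  have := f.finrank_inf_ker_add_finrank_map W
  rw [inf_comm] at h
  omega

end RankNullity

section Adjoint

variable {𝕜 E F : Type*} [RCLike 𝕜]
  [NormedAddCommGroup E] [InnerProductSpace 𝕜 E] [FiniteDimensional 𝕜 E]
  [NormedAddCommGroup F] [InnerProductSpace 𝕜 F] [FiniteDimensional 𝕜 F]

theorem LinearMap.finrank_range_starProjection_comp_adjoint (f : E →ₗ[𝕜] F)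
    (W : Submodule 𝕜 E) :
    finrank 𝕜 (range ((W.starProjection : E →ₗ[𝕜] E) ∘ₗ adjoint f)) = finrank 𝕜 (W.map f) := by
  rw [← finrank_range_adjoint, adjoint_comp, adjoint_adjoint,
    W.starProjection_isSymmetric.adjoint_eq, range_comp, Submodule.range_starProjection]

theorem finrank_orthogonal_span_singleton_add_one {v : E} (hv : v ≠ 0) :
    finrank 𝕜 (𝕜 ∙ v)ᗮ + 1 = finrank 𝕜 E := by
  rw [← finrank_span_singleton (K := 𝕜) hv, add_comm,
    Submodule.finrank_add_finrank_orthogonal]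

end Adjoint

/-- Let `K' = K ∪ {σ}` for a single `p`-simplex `σ`.
If `σ` is positive then `dim B^p(K') = dim B^p(K)`; if `σ` is negative then
`dim B^p(K') = dim B^p(K) + 1` and `dim Z^{p-1}(K') = dim Z^{p-1}(K) − 1`.
Model: chain spaces of `K'` with boundary maps `d2 = ∂_{p+1}`, `d1 = ∂_p`, `d0 = ∂_{p-1}`;
`C_p(K) = (ℝ∙σ)ᗮ`, `σ` has no cofaces.  The coboundary `δ^{p-1}` of `K'` is `adjoint d1`,
and that of `K` is `projσ ∘ adjoint d1` where `projσ` is the orthogonal projection of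
`C_p(K')` onto `(ℝ∙σ)ᗮ` (the transpose of the inclusion `C_p(K) ⊆ C_p(K')`).  Hence
`B^p(K') = range (adjoint d1)`, `B^p(K) = range (projσ ∘ adjoint d1)`,
`Z^{p-1}(K') = ker (adjoint d1)`, `Z^{p-1}(K) = ker (projσ ∘ adjoint d1)`. -/
theorem stmt11
    {C2 C1 C0 Cm : Type*}
    [NormedAddCommGroup C2] [InnerProductSpace ℝ C2] [FiniteDimensional ℝ C2]
    [NormedAddCommGroup C1] [InnerProductSpace ℝ C1] [FiniteDimensional ℝ C1]
    [NormedAddCommGroup C0] [InnerProductSpace ℝ C0] [FiniteDimensional ℝ C0]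
    [NormedAddCommGroup Cm] [InnerProductSpace ℝ Cm] [FiniteDimensional ℝ Cm]
    (d2 : C2 →ₗ[ℝ] C1) (d1 : C1 →ₗ[ℝ] C0) (d0 : C0 →ₗ[ℝ] Cm)
    (hdd1 : d1 ∘ₗ d2 = 0) (hdd0 : d0 ∘ₗ d1 = 0)
    (σ : C1) (hσ : σ ≠ 0)
    (hcoface : LinearMap.range d2 ≤ (ℝ ∙ σ)ᗮ)
    (projσ : C1 →ₗ[ℝ] C1)
    (hproj : projσ = (ℝ ∙ σ)ᗮ.subtype ∘ₗ (Submodule.orthogonalProjectionOnto (ℝ ∙ σ)ᗮ).toLinearMap) :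
    ((homologyDim (LinearMap.ker d1) (LinearMap.range d2) =
        homologyDim (LinearMap.ker d1 ⊓ (ℝ ∙ σ)ᗮ) (LinearMap.range d2) + 1) →
      Module.finrank ℝ ↥(LinearMap.range (LinearMap.adjoint d1)) =
        Module.finrank ℝ ↥(LinearMap.range (projσ ∘ₗ LinearMap.adjoint d1))) ∧
    ((homologyDim (LinearMap.ker d0) (Submodule.map d1 (ℝ ∙ σ)ᗮ) =
        homologyDim (LinearMap.ker d0) (LinearMap.range d1) + 1) →
      Module.finrank ℝ ↥(LinearMap.range (LinearMap.adjoint d1)) =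
        Module.finrank ℝ ↥(LinearMap.range (projσ ∘ₗ LinearMap.adjoint d1)) + 1 ∧
      Module.finrank ℝ ↥(LinearMap.ker (projσ ∘ₗ LinearMap.adjoint d1)) =
        Module.finrank ℝ ↥(LinearMap.ker (LinearMap.adjoint d1)) + 1) := by
  set W := (ℝ ∙ σ)ᗮ
  have hrank : finrank ℝ (range (projσ ∘ₗ adjoint d1)) = finrank ℝ (W.map d1) := by
    rw [hproj]
    exact d1.finrank_range_starProjection_comp_adjoint W
  rw [finrank_range_adjoint, hrank]
  have hd2 : range d2 ≤ ker d1 := range_le_ker_iff.mpr hdd1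
  have hd1 : range d1 ≤ ker d0 := range_le_ker_iff.mpr hdd0
  refine ⟨fun hpos => ?_, fun hneg => ?_⟩
  · refine (d1.finrank_map_eq_finrank_range_of_finrank_ker_eq_succ
      (finrank_orthogonal_span_singleton_add_one hσ).ge ?_).symm
    exact finrank_cycles_eq_add_of_homologyDim_eq_add hd2 (le_inf hd2 hcoface) hpos
  · have hlost : finrank ℝ (range d1) = finrank ℝ (W.map d1) + 1 :=
      finrank_boundaries_eq_add_of_homologyDim_eq_add hd1
        (map_le_range.trans hd1) hneg
    have hnull := (projσ ∘ₗ adjoint d1).finrank_range_add_finrank_ker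
    have hnull' := (adjoint d1).finrank_range_add_finrank_ker
    rw [hrank] at hnull
    rw [finrank_range_adjoint] at hnull'
    omega
end

section
/- Let K ⊆ K' be finite simplicial complexes with K' = K ∪ {σ} for a single p-simplex σ, and let σ̂ ∈ C^p(K') be the dual cochain of σ. Suppose H^har contains a new harmonic p-cycle, i.e., σ is positive. If ψ is any element of (Z_p(K') ∩ Z^p(K')) \ (Z_p(K) ∩ Z^p(K)), then when ψ is written in a basis of Z^p(K') consisting of a basis of Z^p(K) together with σ̂, the coefficient of σ̂ is nonzero; consequently ∂(σ̂), as a chain, lies in the span of {∂(b) : b ∈ B^p-basis of K extended to K'} together with boundaries coming from the decomposition of ψ. -/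
open Submodule
open scoped InnerProductSpace

section
variable {𝕜 E F : Type*} [RCLike 𝕜] [NormedAddCommGroup E] [InnerProductSpace 𝕜 E]
  [AddCommGroup F] [Module 𝕜 F]

theorem inner_ne_zero_of_mem_of_notMem_inf_orthogonal {W : Submodule 𝕜 E} {σ ψ : E}
    (hψ : ψ ∈ W) (hψσ : ψ ∉ W ⊓ (𝕜 ∙ σ)ᗮ) : ⟪σ, ψ⟫_𝕜 ≠ 0 :=
  fun h => hψσ ⟨hψ, mem_orthogonal_singleton_iff_inner_right.mpr h⟩

/-- Shearing `σ` along `ψ ∈ ker f` removes its `σ`-component without changing its image. -/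
theorem apply_mem_map_inf_orthogonal_singleton {f : E →ₗ[𝕜] F} {W : Submodule 𝕜 E}
    {σ ψ : E} (hσ : σ ∈ W) (hψ : ψ ∈ W) (hfψ : f ψ = 0) (hσψ : ⟪σ, ψ⟫_𝕜 ≠ 0) :
    f σ ∈ (W ⊓ (𝕜 ∙ σ)ᗮ).map f := by
  set c := ⟪σ, σ⟫_𝕜 / ⟪σ, ψ⟫_𝕜
  refine ⟨σ - c • ψ, ⟨W.sub_mem hσ (W.smul_mem c hψ), ?_⟩, by simp [hfψ]⟩
  rw [SetLike.mem_coe, mem_orthogonal_singleton_iff_inner_right, inner_sub_right,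
    inner_smul_right, div_mul_cancel₀ _ hσψ, sub_self]

end

theorem stmt15_general
    {C2 C1 C0 : Type*}
    [NormedAddCommGroup C2] [InnerProductSpace ℝ C2]
    [NormedAddCommGroup C1] [InnerProductSpace ℝ C1]
    [NormedAddCommGroup C0] [InnerProductSpace ℝ C0]
    (d2 : C2 →ₗ[ℝ] C1) (d1 : C1 →ₗ[ℝ] C0)
    (σ : C1)
    (hcoface : LinearMap.range d2 ≤ (ℝ ∙ σ)ᗮ)
    (ψ : C1)
    (hψ : ψ ∈ LinearMap.ker d1 ⊓ (LinearMap.range d2)ᗮ)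
    (hψ' : ψ ∉ LinearMap.ker d1 ⊓ (LinearMap.range d2)ᗮ ⊓ (ℝ ∙ σ)ᗮ) :
    (inner ℝ ψ σ : ℝ) ≠ 0 ∧
      d1 σ ∈ Submodule.map d1 ((LinearMap.range d2)ᗮ ⊓ (ℝ ∙ σ)ᗮ) := by
  have hσψ : ⟪σ, ψ⟫_ℝ ≠ 0 := inner_ne_zero_of_mem_of_notMem_inf_orthogonal hψ hψ'
  have hσ : σ ∈ (LinearMap.range d2)ᗮ :=
    isOrtho_comm.mp hcoface (mem_span_singleton_self σ)
  exact ⟨real_inner_comm σ ψ ▸ hσψ,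
    apply_mem_map_inf_orthogonal_singleton hσ hψ.2 hψ.1 hσψ⟩

/-- Let `K' = K ∪ {σ}` for a single positive `p`-simplex `σ`, and let `σ̂` be
the dual cochain of `σ` (identified with `σ` itself).  If `ψ` is a harmonic `p`-cycle of
`K'` that is not a harmonic `p`-cycle of `K`, then in the decomposition of the cocycle
space `Z^p(K') = ℝσ̂ ⊕ Z^p(K)` the coefficient of `σ̂` in `ψ` is nonzero (equivalently
`⟪ψ, σ⟫ ≠ 0`); consequently `∂σ̂ = d1 σ` lies in the span of the boundaries of `p`-cochains
of `K` appearing in the decomposition of `ψ`, i.e. in `d1(Z^p(K)) = d1((range d2)ᗮ ⊓ (ℝ∙σ)ᗮ)`.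
Model: boundary maps `d2 = ∂_{p+1}`, `d1 = ∂_p` of `K'`; `C_p(K) = (ℝ∙σ)ᗮ`; `σ` has no
cofaces; `har_p(K') = ker d1 ⊓ (range d2)ᗮ`, `har_p(K) = har_p(K') ⊓ (ℝ∙σ)ᗮ`;
positivity of `σ` means `dim H_p(K') = dim H_p(K) + 1`. -/
theorem stmt15
    {C2 C1 C0 : Type*}
    [NormedAddCommGroup C2] [InnerProductSpace ℝ C2] [FiniteDimensional ℝ C2]
    [NormedAddCommGroup C1] [InnerProductSpace ℝ C1] [FiniteDimensional ℝ C1]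
    [NormedAddCommGroup C0] [InnerProductSpace ℝ C0] [FiniteDimensional ℝ C0]
    (d2 : C2 →ₗ[ℝ] C1) (d1 : C1 →ₗ[ℝ] C0)
    (hdd1 : d1 ∘ₗ d2 = 0)
    (σ : C1) (hσ : σ ≠ 0)
    (hcoface : LinearMap.range d2 ≤ (ℝ ∙ σ)ᗮ)
    (hpos : homologyDim (LinearMap.ker d1) (LinearMap.range d2) =
      homologyDim (LinearMap.ker d1 ⊓ (ℝ ∙ σ)ᗮ) (LinearMap.range d2) + 1)
    (ψ : C1)
    (hψ : ψ ∈ LinearMap.ker d1 ⊓ (LinearMap.range d2)ᗮ)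
    (hψ' : ψ ∉ LinearMap.ker d1 ⊓ (LinearMap.range d2)ᗮ ⊓ (ℝ ∙ σ)ᗮ) :
    (inner ℝ ψ σ : ℝ) ≠ 0 ∧
      d1 σ ∈ Submodule.map d1 ((LinearMap.range d2)ᗮ ⊓ (ℝ ∙ σ)ᗮ) :=
  stmt15_general d2 d1 σ hcoface ψ hψ hψ'
end

section
/- Let F : ∅ = K_0 ⊆ K_1 ⊆ ... ⊆ K_m be a simplex-wise filtration of a finite simplicial complex, and suppose a pairing π matches each birth index b with a death index d of the harmonic zigzag module H^har(F) such that for each pair (b,d) there exists a harmonic cycle z with z ∈ H^har(K_i) for all b ≤ i ≤ d, z ∉ H^har(K_{b-1}), and (if d < m) z ∉ H^har(K_{d+1}). Then the multiset of intervals {[b,d]} given by π equals the barcode of the zigzag module H^har(F). -/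
open Module

set_option linter.unusedSectionVars false

section Stmt17Aux

variable {W : Type*} [AddCommGroup W] [Module ℝ W] [FiniteDimensional ℝ W]

/-- The intersection `⨅_{i ∈ [b,e]} H i`. -/
def s17U (H : ℕ → Submodule ℝ W) (b e : ℕ) : Submodule ℝ W := ⨅ i ∈ Finset.Icc b e, H i

/-- Multiplicity-one condition for the interval `[b,e]`. -/
def s17P (m : ℕ) (H : ℕ → Submodule ℝ W) (b e : ℕ) : Prop :=
  Module.finrank ℝ ↥(s17U H b e) =
    Module.finrank ℝ ↥((s17U H b e ⊓ H (b - 1)) ⊔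
      (s17U H b e ⊓ (if e < m then H (e + 1) else ⊥))) + 1

lemma s17U_le (H : ℕ → Submodule ℝ W) {b e i : ℕ} (h1 : b ≤ i) (h2 : i ≤ e) :
    s17U H b e ≤ H i := iInf₂_le i (Finset.mem_Icc.mpr ⟨h1, h2⟩)

lemma s17U_mono (H : ℕ → Submodule ℝ W) {b b' e e' : ℕ} (h1 : b ≤ b') (h2 : e' ≤ e) :
    s17U H b e ≤ s17U H b' e' :=
  le_iInf₂ fun i hi => by
    obtain ⟨hi1, hi2⟩ := Finset.mem_Icc.mp hi
    exact s17U_le H (le_trans h1 hi1) (le_trans hi2 h2)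

lemma s17U_self (H : ℕ → Submodule ℝ W) (b : ℕ) : s17U H b b = H b := by
  refine le_antisymm (s17U_le H le_rfl le_rfl) (le_iInf₂ fun i hi => ?_)
  obtain ⟨h1, h2⟩ := Finset.mem_Icc.mp hi
  have : i = b := le_antisymm h2 h1
  rw [this]

lemma s17U_succ (H : ℕ → Submodule ℝ W) {b e : ℕ} (hb : b ≤ e + 1) :
    s17U H b (e + 1) = s17U H b e ⊓ H (e + 1) := by
  refine le_antisymm (le_inf (s17U_mono H le_rfl (Nat.le_succ e))
    (s17U_le H hb le_rfl)) (le_iInf₂ fun i hi => ?_)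
  · obtain ⟨h1, h2⟩ := Finset.mem_Icc.mp hi
    rcases Nat.lt_or_ge i (e + 1) with h | h
    · exact inf_le_left.trans (s17U_le H h1 (by omega))
    · have : i = e + 1 := by omega
      rw [this]; exact inf_le_right

lemma s17U_pred (H : ℕ → Submodule ℝ W) {b e : ℕ} (h1 : 1 ≤ b) (h2 : b ≤ e + 1) :
    s17U H (b - 1) e = H (b - 1) ⊓ s17U H b e := by
  refine le_antisymm (le_inf (s17U_le H le_rfl (by omega)) (s17U_mono H (by omega) le_rfl))
    (le_iInf₂ fun i hi => ?_)
  obtain ⟨hi1, hi2⟩ := Finset.mem_Icc.mp hi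
  rcases Nat.lt_or_ge i b with h | h
  · have : i = b - 1 := by omega
    rw [this]; exact inf_le_left
  · exact inf_le_right.trans (s17U_le H h hi2)

lemma s17_codim (N X Y : Submodule ℝ W) (hNY : N ≤ Y) (hXY : X ≤ Y)
    (hd : finrank ℝ Y ≤ finrank ℝ X + 1) :
    finrank ℝ N ≤ finrank ℝ ↥(N ⊓ X) + 1 := by
  have h1 := Submodule.finrank_sup_add_finrank_inf_eq N X
  have h2 : finrank ℝ ↥(N ⊔ X) ≤ finrank ℝ Y := Submodule.finrank_mono (sup_le hNY hXY)
  have h3 : finrank ℝ X ≤ finrank ℝ ↥(N ⊔ X) := Submodule.finrank_mono le_sup_right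
  omega

lemma s17_aux (N A X : Submodule ℝ W) (hA : A ≤ N)
    (hdim : finrank ℝ N ≤ finrank ℝ ↥(N ⊓ X) + 1) :
    (finrank ℝ N = finrank ℝ ↥(A ⊔ (N ⊓ X)) + 1 ↔ ¬(N ≤ X) ∧ A ≤ X) := by
  constructor
  · intro h
    have hMN : A ⊔ (N ⊓ X) ≤ N := sup_le hA inf_le_left
    have hfMN : finrank ℝ ↥(A ⊔ (N ⊓ X)) ≤ finrank ℝ N := Submodule.finrank_mono hMN
    constructor
    · intro hNX
      have : A ⊔ (N ⊓ X) = N := by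
        rw [inf_eq_left.mpr hNX]; exact sup_eq_right.mpr hA
      rw [this] at h; omega
    · by_contra hAX
      obtain ⟨a, haA, haX⟩ := SetLike.not_le_iff_exists.mp hAX
      have hCM : N ⊓ X < A ⊔ (N ⊓ X) := by
        refine lt_of_le_of_ne le_sup_right fun he => ?_
        have : a ∈ N ⊓ X := he ▸ ((le_sup_left : A ≤ A ⊔ (N ⊓ X)) haA)
        exact haX this.2
      have := Submodule.finrank_lt_finrank_of_lt hCM
      omega
  · rintro ⟨hNX, hAX⟩
    have hAC : A ⊔ (N ⊓ X) = N ⊓ X := sup_eq_right.mpr (le_inf hA hAX)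
    rw [hAC]
    have hlt : N ⊓ X < N :=
      lt_of_le_of_ne inf_le_left fun he => hNX (inf_eq_left.mp he)
    have := Submodule.finrank_lt_finrank_of_lt hlt
    omega


lemma s17_birth_dim (m : ℕ) (H : ℕ → Submodule ℝ W)
    (hstep : ∀ i < m,
      Module.finrank ℝ (H (i + 1)) = Module.finrank ℝ (H i) + 1 ∨
      Module.finrank ℝ (H i) = Module.finrank ℝ (H (i + 1)) + 1)
    {b : ℕ} (h1 : 1 ≤ b) (h2 : b ≤ m) (hlt : H (b - 1) < H b) :
    finrank ℝ (H b) = finrank ℝ (H (b - 1)) + 1 := by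
  have hb : b - 1 + 1 = b := by omega
  have h := hstep (b - 1) (by omega)
  rw [hb] at h
  rcases h with h | h
  · exact h
  · exact absurd (Submodule.finrank_lt_finrank_of_lt hlt) (by omega)

lemma s17_M1 (m : ℕ) (H : ℕ → Submodule ℝ W)
    (hzig : ∀ i < m, H i ≤ H (i + 1) ∨ H (i + 1) ≤ H i)
    (hstep : ∀ i < m,
      Module.finrank ℝ (H (i + 1)) = Module.finrank ℝ (H i) + 1 ∨
      Module.finrank ℝ (H i) = Module.finrank ℝ (H (i + 1)) + 1)
    {b d : ℕ} (h1 : 1 ≤ b) (h2 : b ≤ d) (h3 : d ≤ m) :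
    s17P m H b d ↔
      (H (b - 1) < H b ∧ ¬(s17U H b d ≤ H (b - 1)) ∧
        (d < m → s17U H b (d + 1) ≤ H (b - 1))) := by
  by_cases hb : H (b - 1) < H b
  · have hNb : s17U H b d ≤ H b := s17U_le H le_rfl h2
    have hdim : finrank ℝ ↥(s17U H b d) ≤ finrank ℝ ↥(s17U H b d ⊓ H (b - 1)) + 1 :=
      s17_codim _ _ (H b) hNb hb.le (s17_birth_dim m H hstep h1 (le_trans h2 h3) hb).le
    unfold s17P
    rw [sup_comm,
      s17_aux (s17U H b d) (s17U H b d ⊓ (if d < m then H (d + 1) else ⊥)) (H (b - 1))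
        inf_le_left hdim]
    constructor
    · rintro ⟨hn, ha⟩
      refine ⟨hb, hn, fun hdm => ?_⟩
      rw [if_pos hdm] at ha
      rw [s17U_succ H (by omega)]
      exact ha
    · rintro ⟨-, hn, ha⟩
      refine ⟨hn, ?_⟩
      by_cases hdm : d < m
      · rw [if_pos hdm]
        have := ha hdm
        rw [s17U_succ H (by omega)] at this
        exact this
      · rw [if_neg hdm]
        simp
  · have hb' : H b ≤ H (b - 1) := by
      have hz := hzig (b - 1) (by omega)
      rw [(by omega : b - 1 + 1 = b)] at hz
      rcases hz with h | h
      · rcases lt_or_eq_of_le h with h' | h'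
        · exact absurd h' hb
        · exact h'.ge
      · exact h
    have hNle : s17U H b d ≤ H (b - 1) := (s17U_le H le_rfl h2).trans hb'
    constructor
    · intro hP
      exfalso
      unfold s17P at hP
      rw [inf_eq_left.mpr hNle, sup_eq_left.mpr inf_le_left] at hP
      omega
    · rintro ⟨hb'', -⟩
      exact absurd hb'' hb

lemma s17_death_dim (m : ℕ) (H : ℕ → Submodule ℝ W)
    (hstep : ∀ i < m,
      Module.finrank ℝ (H (i + 1)) = Module.finrank ℝ (H i) + 1 ∨
      Module.finrank ℝ (H i) = Module.finrank ℝ (H (i + 1)) + 1)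
    {d : ℕ} (h1 : d < m) (hlt : H (d + 1) < H d) :
    finrank ℝ (H d) = finrank ℝ (H (d + 1)) + 1 := by
  rcases hstep d h1 with h | h
  · exact absurd (Submodule.finrank_lt_finrank_of_lt hlt) (by omega)
  · exact h

lemma s17_M2 (m : ℕ) (H : ℕ → Submodule ℝ W)
    (hstep : ∀ i < m,
      Module.finrank ℝ (H (i + 1)) = Module.finrank ℝ (H i) + 1 ∨
      Module.finrank ℝ (H i) = Module.finrank ℝ (H (i + 1)) + 1)
    {b d : ℕ} (h1 : 1 ≤ b) (h2 : b ≤ d) (h3 : d < m) (hd : H (d + 1) < H d) :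
    s17P m H b d ↔
      (¬(s17U H b d ≤ H (d + 1)) ∧ s17U H (b - 1) d ≤ H (d + 1)) := by
  have hNd : s17U H b d ≤ H d := s17U_le H h2 le_rfl
  have hdim : finrank ℝ ↥(s17U H b d) ≤ finrank ℝ ↥(s17U H b d ⊓ H (d + 1)) + 1 :=
    s17_codim _ _ (H d) hNd hd.le (s17_death_dim m H hstep h3 hd).le
  unfold s17P
  rw [if_pos h3,
    s17_aux (s17U H b d) (s17U H b d ⊓ H (b - 1)) (H (d + 1)) inf_le_left hdim]
  have he : s17U H b d ⊓ H (b - 1) = s17U H (b - 1) d := by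
    rw [s17U_pred H h1 (by omega), inf_comm]
  rw [he]

lemma s17_Pdeath (m : ℕ) (H : ℕ → Submodule ℝ W)
    (hzig : ∀ i < m, H i ≤ H (i + 1) ∨ H (i + 1) ≤ H i)
    (hstep : ∀ i < m,
      Module.finrank ℝ (H (i + 1)) = Module.finrank ℝ (H i) + 1 ∨
      Module.finrank ℝ (H i) = Module.finrank ℝ (H (i + 1)) + 1)
    {b d : ℕ} (h1 : 1 ≤ b) (h2 : b ≤ d) (h3 : d ≤ m)
    (hP : s17P m H b d) (hdm : d < m) : H (d + 1) < H d := by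
  obtain ⟨hb, hn, ha⟩ := (s17_M1 m H hzig hstep h1 h2 h3).mp hP
  have ha' := ha hdm
  rw [s17U_succ H (by omega)] at ha'
  have habs : H d ≤ H (d + 1) → False := by
    intro h
    have hsub : s17U H b d ≤ H (d + 1) := (s17U_le H h2 le_rfl).trans h
    exact hn (le_trans (le_inf le_rfl hsub) ha')
  rcases hzig d hdm with h | h
  · exact absurd h habs
  · rcases lt_or_eq_of_le h with h' | h'
    · exact h'
    · exact absurd h'.ge habs


lemma s17_uniq_d (m : ℕ) (H : ℕ → Submodule ℝ W)
    (hzig : ∀ i < m, H i ≤ H (i + 1) ∨ H (i + 1) ≤ H i)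
    (hstep : ∀ i < m,
      Module.finrank ℝ (H (i + 1)) = Module.finrank ℝ (H i) + 1 ∨
      Module.finrank ℝ (H i) = Module.finrank ℝ (H (i + 1)) + 1)
    {b d d' : ℕ} (h1 : 1 ≤ b) (h2 : b ≤ d) (h3 : d ≤ m) (h2' : b ≤ d') (h3' : d' ≤ m)
    (hP : s17P m H b d) (hP' : s17P m H b d') : d = d' := by
  have key : ∀ e e', b ≤ e → e ≤ m → b ≤ e' → e' ≤ m →
      s17P m H b e → s17P m H b e' → e < e' → False := by
    intro e e' he1 he2 he1' he2' hQ hQ' hlt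
    obtain ⟨-, -, ha⟩ := (s17_M1 m H hzig hstep h1 he1 he2).mp hQ
    obtain ⟨-, hn', -⟩ := (s17_M1 m H hzig hstep h1 he1' he2').mp hQ'
    exact hn' ((s17U_mono H le_rfl (by omega : e + 1 ≤ e')).trans (ha (by omega)))
  rcases lt_trichotomy d d' with h | h | h
  · exact absurd (key d d' h2 h3 h2' h3' hP hP' h) not_false
  · exact h
  · exact absurd (key d' d h2' h3' h2 h3 hP' hP h) not_false

lemma s17_uniq_b (m : ℕ) (H : ℕ → Submodule ℝ W)
    (hzig : ∀ i < m, H i ≤ H (i + 1) ∨ H (i + 1) ≤ H i)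
    (hstep : ∀ i < m,
      Module.finrank ℝ (H (i + 1)) = Module.finrank ℝ (H i) + 1 ∨
      Module.finrank ℝ (H i) = Module.finrank ℝ (H (i + 1)) + 1)
    {b b' d : ℕ} (h1 : 1 ≤ b) (h2 : b ≤ d) (h1' : 1 ≤ b') (h2' : b' ≤ d) (h3 : d < m)
    (hP : s17P m H b d) (hP' : s17P m H b' d) : b = b' := by
  have hd : H (d + 1) < H d :=
    s17_Pdeath m H hzig hstep h1 h2 h3.le hP h3
  have key : ∀ c c', 1 ≤ c → c ≤ d → 1 ≤ c' → c' ≤ d →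
      s17P m H c d → s17P m H c' d → c < c' → False := by
    intro c c' hc1 hc2 hc1' hc2' hQ hQ' hlt
    obtain ⟨hn, -⟩ := (s17_M2 m H hstep hc1 hc2 h3 hd).mp hQ
    obtain ⟨-, ha'⟩ := (s17_M2 m H hstep hc1' hc2' h3 hd).mp hQ'
    exact hn ((s17U_mono H (by omega : c ≤ c' - 1) le_rfl).trans ha')
  rcases lt_trichotomy b b' with h | h | h
  · exact absurd (key b b' h1 h2 h1' h2' hP hP' h) not_false
  · exact h
  · exact absurd (key b' b h1' h2' h1 h2 hP' hP h) not_false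

lemma s17_exists_b (m : ℕ) (H : ℕ → Submodule ℝ W) (h0 : H 0 = ⊥)
    (hstep : ∀ i < m,
      Module.finrank ℝ (H (i + 1)) = Module.finrank ℝ (H i) + 1 ∨
      Module.finrank ℝ (H i) = Module.finrank ℝ (H (i + 1)) + 1)
    {d : ℕ} (hdm : d < m) (hd : H (d + 1) < H d) :
    ∃ b, 1 ≤ b ∧ b ≤ d ∧ s17P m H b d := by
  classical
  have hd1 : 1 ≤ d := by
    by_contra h
    have hd0 : d = 0 := by omega
    rw [hd0, h0] at hd
    exact absurd hd (not_lt_bot)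
  have hex : ∃ b, 1 ≤ b ∧ b ≤ d ∧ ¬(s17U H b d ≤ H (d + 1)) :=
    ⟨d, hd1, le_rfl, by rw [s17U_self]; exact hd.not_ge⟩
  obtain ⟨hb1, hb2, hb3⟩ := Nat.find_spec hex
  refine ⟨Nat.find hex, hb1, hb2, ?_⟩
  rw [s17_M2 m H hstep hb1 hb2 hdm hd]
  refine ⟨hb3, ?_⟩
  by_cases hbone : Nat.find hex = 1
  · rw [hbone]
    have hU0 : s17U H 0 d ≤ H 0 := s17U_le H le_rfl (by omega)
    rw [h0] at hU0
    exact le_trans (by simpa using hU0) bot_le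
  · have hmin := Nat.find_min hex (by omega : Nat.find hex - 1 < Nat.find hex)
    push_neg at hmin
    exact hmin (by omega) (by omega)


attribute [local instance] Classical.propDecidable

/-- Canonical death index for birth `b`. -/
noncomputable def s17dstar (m : ℕ) (H : ℕ → Submodule ℝ W) (b : ℕ) : ℕ :=
  Nat.findGreatest (fun e => ¬(s17U H b e ≤ H (b - 1))) m

lemma s17dstar_le_m (m : ℕ) (H : ℕ → Submodule ℝ W) (b : ℕ) : s17dstar m H b ≤ m :=
  Nat.findGreatest_le m

lemma s17dstar_ge (m : ℕ) (H : ℕ → Submodule ℝ W) {b e : ℕ} (h2 : e ≤ m)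
    (h : ¬(s17U H b e ≤ H (b - 1))) : e ≤ s17dstar m H b :=
  Nat.le_findGreatest h2 h

lemma s17dstar_spec (m : ℕ) (H : ℕ → Submodule ℝ W) {b : ℕ} (h2 : b ≤ m)
    (h : ¬(s17U H b b ≤ H (b - 1))) :
    ¬(s17U H b (s17dstar m H b) ≤ H (b - 1)) :=
  Nat.findGreatest_spec (P := fun e => ¬(s17U H b e ≤ H (b - 1))) h2 h

lemma s17dstar_max (m : ℕ) (H : ℕ → Submodule ℝ W) {b e : ℕ}
    (h : s17dstar m H b < e) (he : e ≤ m) : s17U H b e ≤ H (b - 1) :=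
  not_not.mp (Nat.findGreatest_is_greatest h he)

end Stmt17Aux

/-- Let `F : ∅ = K_0 ⊆ ... ⊆ K_m` be a simplex-wise filtration and let
`H i = H^har(K_i)` be the harmonic chain groups, forming a zigzag module of subspaces of a
common chain space `W` connected by forward or backward inclusions, with each step changing
dimension by exactly one.  Suppose `pairs` is a pairing matching each birth index `b`
(where `H (b-1) < H b`) with a death index `d` (where `H (d+1) < H d`, or `d = m` for
indices surviving to the end) such that each pair `(b, d)` admits a harmonic representative:
a cycle `z ∈ H i` for all `b ≤ i ≤ d` with `z ∉ H (b-1)` and `z ∉ H (d+1)` when `d < m`.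
Then the multiset of intervals `{[b,d]}` given by the pairing equals the barcode of the
zigzag module: an interval `[b,d]` belongs to the pairing iff its barcode multiplicity
`dim (⋂_{b ≤ i ≤ d} H i) − dim ((⋂ H i ∩ H (b-1)) + (⋂ H i ∩ H (d+1)))` equals `1`
(with `H (d+1)` replaced by `⊥` when `d = m`; multiplicities are `0` or `1` here since
dimensions change by one at each step). -/
theorem stmt17 {W : Type*} [AddCommGroup W] [Module ℝ W] [FiniteDimensional ℝ W]
    (m : ℕ) (H : ℕ → Submodule ℝ W)
    (h0 : H 0 = ⊥)
    (hzig : ∀ i < m, H i ≤ H (i + 1) ∨ H (i + 1) ≤ H i)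
    (hstep : ∀ i < m,
      Module.finrank ℝ (H (i + 1)) = Module.finrank ℝ (H i) + 1 ∨
      Module.finrank ℝ (H i) = Module.finrank ℝ (H (i + 1)) + 1)
    (pairs : Finset (ℕ × ℕ))
    (hvalid : ∀ p ∈ pairs, 1 ≤ p.1 ∧ p.1 ≤ p.2 ∧ p.2 ≤ m)
    (hfun : ∀ b d d', (b, d) ∈ pairs → (b, d') ∈ pairs → d = d')
    (hinj : ∀ b b' d, (b, d) ∈ pairs → (b', d) ∈ pairs → b = b')
    (hbirths : ∀ b, 1 ≤ b → b ≤ m → ((∃ d, (b, d) ∈ pairs) ↔ H (b - 1) < H b))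
    (hdeaths : ∀ d, d < m → ((∃ b, (b, d) ∈ pairs) ↔ H (d + 1) < H d))
    (hrep : ∀ p ∈ pairs, ∃ z : W,
      (∀ i, p.1 ≤ i → i ≤ p.2 → z ∈ H i) ∧ z ∉ H (p.1 - 1) ∧ (p.2 < m → z ∉ H (p.2 + 1))) :
    ∀ b d, 1 ≤ b → b ≤ d → d ≤ m →
      ((b, d) ∈ pairs ↔
        Module.finrank ℝ ↥(⨅ i ∈ Finset.Icc b d, H i) =
          Module.finrank ℝ
            ↥(((⨅ i ∈ Finset.Icc b d, H i) ⊓ H (b - 1)) ⊔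
              ((⨅ i ∈ Finset.Icc b d, H i) ⊓ (if d < m then H (d + 1) else ⊥))) + 1) := by
  classical
  set dstar : ℕ → ℕ := s17dstar m H with hdstar
  have hdsm : ∀ b, dstar b ≤ m := fun b => s17dstar_le_m m H b
  have hds1 : ∀ b, 1 ≤ b → b ≤ m → H (b - 1) < H b → b ≤ dstar b := by
    intro b h1 h2 hb
    exact s17dstar_ge m H h2 (by rw [s17U_self]; exact hb.not_ge)
  have hdsP : ∀ b, 1 ≤ b → b ≤ m → H (b - 1) < H b → s17P m H b (dstar b) := by
    intro b h1 h2 hb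
    have hbd := hds1 b h1 h2 hb
    rw [s17_M1 m H hzig hstep h1 hbd (hdsm b)]
    refine ⟨hb, ?_, fun hlt => ?_⟩
    · exact s17dstar_spec m H h2 (by rw [s17U_self]; exact hb.not_ge)
    · exact s17dstar_max m H (Nat.lt_succ_self (dstar b)) (by omega : dstar b + 1 ≤ m)
  have hUmem : ∀ b e (z : W), (∀ i, b ≤ i → i ≤ e → z ∈ H i) → z ∈ s17U H b e := by
    intro b e z hz
    refine (Submodule.mem_iInf _).mpr fun i => (Submodule.mem_iInf _).mpr fun hi => ?_
    obtain ⟨hi1, hi2⟩ := Finset.mem_Icc.mp hi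
    exact hz i hi1 hi2
  have hpair2 : ∀ p ∈ pairs, p.2 ≤ dstar p.1 := by
    intro p hp
    obtain ⟨hv1, hv2, hv3⟩ := hvalid p hp
    obtain ⟨z, hz1, hz2, hz3⟩ := hrep p hp
    exact s17dstar_ge m H hv3 fun hle => hz2 (hle (hUmem _ _ _ hz1))
  have hpairP : ∀ p ∈ pairs, s17P m H p.1 (dstar p.1) ∧ p.1 ≤ dstar p.1 := by
    intro p hp
    obtain ⟨hv1, hv2, hv3⟩ := hvalid p hp
    have hb : H (p.1 - 1) < H p.1 := (hbirths p.1 hv1 (le_trans hv2 hv3)).mp ⟨p.2, hp⟩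
    exact ⟨hdsP p.1 hv1 (le_trans hv2 hv3) hb, hds1 p.1 hv1 (le_trans hv2 hv3) hb⟩
  set Dfin : Finset ℕ := (Finset.range m).filter (fun d => H (d + 1) < H d) with hDfin
  have hsum1 : ∑ p ∈ pairs, (m - p.2) = ∑ d ∈ Dfin, (m - d) := by
    rw [← Finset.sum_filter_add_sum_filter_not pairs (fun p => p.2 < m)]
    have hz : ∑ p ∈ pairs.filter (fun p => ¬ p.2 < m), (m - p.2) = 0 := by
      refine Finset.sum_eq_zero fun p hp => ?_
      rw [Finset.mem_filter] at hp
      have := (hvalid p hp.1).2.2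
      omega
    rw [hz, add_zero]
    refine Finset.sum_bij (fun p _ => p.2) ?_ ?_ ?_ ?_
    · intro p hp
      rw [Finset.mem_filter] at hp
      rw [hDfin, Finset.mem_filter, Finset.mem_range]
      exact ⟨hp.2, (hdeaths p.2 hp.2).mp ⟨p.1, by simpa using hp.1⟩⟩
    · intro p hp q hq he
      have he' : p.2 = q.2 := he
      rw [Finset.mem_filter] at hp hq
      have hq' : (q.1, p.2) ∈ pairs := by rw [he']; simpa using hq.1
      have hp' : (p.1, p.2) ∈ pairs := by simpa using hp.1
      exact Prod.ext (hinj p.1 q.1 p.2 hp' hq') he'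
    · intro d hd
      rw [hDfin, Finset.mem_filter, Finset.mem_range] at hd
      obtain ⟨b, hb⟩ := (hdeaths d hd.1).mpr hd.2
      exact ⟨(b, d), Finset.mem_filter.mpr ⟨hb, hd.1⟩, rfl⟩
    · intro p hp; rfl
  have hsum2 : ∑ p ∈ pairs, (m - dstar p.1) = ∑ d ∈ Dfin, (m - d) := by
    rw [← Finset.sum_filter_add_sum_filter_not pairs (fun p => dstar p.1 < m)]
    have hz : ∑ p ∈ pairs.filter (fun p => ¬ dstar p.1 < m), (m - dstar p.1) = 0 := by
      refine Finset.sum_eq_zero fun p hp => ?_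
      rw [Finset.mem_filter] at hp
      have := hdsm p.1
      omega
    rw [hz, add_zero]
    refine Finset.sum_bij (fun p _ => dstar p.1) ?_ ?_ ?_ ?_
    · intro p hp
      rw [Finset.mem_filter] at hp
      obtain ⟨hP, hle⟩ := hpairP p hp.1
      obtain ⟨hv1, hv2, hv3⟩ := hvalid p hp.1
      rw [hDfin, Finset.mem_filter, Finset.mem_range]
      exact ⟨hp.2, s17_Pdeath m H hzig hstep hv1 hle (hdsm p.1) hP hp.2⟩
    · intro p hp q hq he
      have he' : dstar p.1 = dstar q.1 := he
      rw [Finset.mem_filter] at hp hq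
      obtain ⟨hPp, hlep⟩ := hpairP p hp.1
      obtain ⟨hPq, hleq⟩ := hpairP q hq.1
      obtain ⟨hv1, hv2, hv3⟩ := hvalid p hp.1
      obtain ⟨hw1, hw2, hw3⟩ := hvalid q hq.1
      have hb : p.1 = q.1 := by
        refine s17_uniq_b m H hzig hstep hv1 hlep hw1 ?_ hp.2 hPp ?_
        · rw [he']; exact hleq
        · rw [he']; exact hPq
      have hd2 : p.2 = q.2 := hfun p.1 p.2 q.2 (by simpa using hp.1)
        (by rw [hb]; simpa using hq.1)
      exact Prod.ext hb hd2
    · intro d hd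
      rw [hDfin, Finset.mem_filter, Finset.mem_range] at hd
      obtain ⟨b, hb1, hb2, hbP⟩ := s17_exists_b m H h0 hstep hd.1 hd.2
      have hbirth : H (b - 1) < H b := ((s17_M1 m H hzig hstep hb1 hb2 hd.1.le).mp hbP).1
      obtain ⟨d', hp⟩ := (hbirths b hb1 (by omega)).mpr hbirth
      have hdd : dstar b = d :=
        s17_uniq_d m H hzig hstep hb1 (hds1 b hb1 (by omega) hbirth) (hdsm b) hb2 hd.1.le
          (hdsP b hb1 (by omega) hbirth) hbP
      refine ⟨(b, d'), Finset.mem_filter.mpr ⟨hp, ?_⟩, ?_⟩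
      · show dstar (b, d').1 < m
        simpa [hdd] using hd.1
      · show dstar (b, d').1 = d
        simpa using hdd
    · intro p hp; rfl
  have hkey : ∀ p ∈ pairs, dstar p.1 = p.2 := by
    have hsum := hsum2.trans hsum1.symm
    have hle : ∀ p ∈ pairs, m - dstar p.1 ≤ m - p.2 := by
      intro p hp
      have := hpair2 p hp
      omega
    have heach := (Finset.sum_eq_sum_iff_of_le hle).mp hsum
    intro p hp
    have h1 := heach p hp
    have h2 := hpair2 p hp
    have h3 := hdsm p.1
    have h4 := (hvalid p hp).2.2
    omega
  intro b d hb1 hbd hdm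
  constructor
  · intro hp
    have h : dstar b = d := hkey (b, d) hp
    have hP := (hpairP (b, d) hp).1
    show s17P m H b d
    exact h ▸ hP
  · intro hgoal
    have hP : s17P m H b d := hgoal
    have hbirth : H (b - 1) < H b := ((s17_M1 m H hzig hstep hb1 hbd hdm).mp hP).1
    obtain ⟨d', hp⟩ := (hbirths b hb1 (le_trans hbd hdm)).mpr hbirth
    have h : dstar b = d' := hkey (b, d') hp
    have hdd : d = dstar b :=
      s17_uniq_d m H hzig hstep hb1 hbd hdm (hds1 b hb1 (le_trans hbd hdm) hbirth)
        (hdsm b) hP (hdsP b hb1 (le_trans hbd hdm) hbirth)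
    have hd' : d = d' := by rw [hdd]; exact h
    rw [hd']; exact hp
end

section
/- Let K_i ⊆ K_{i+1} = K_i ∪ {σ} with σ a negative p-simplex, let z_1, ..., z_k be harmonic (p−1)-cycles of K_i (boundaryless cocycles), and set α_j = z_j(∂σ) viewing each z_j as a cochain. If α_* := α_{j*} ≠ 0 for some j*, then for every j with α_j ≠ 0, the cycle z_j − (α_j/α_*)·z_{j*} is a harmonic (p−1)-cycle of K_{i+1}. -/
/-! Adding `σ` enlarges the boundaries by the single vector `∂σ`: `im ∂_p(K_{i+1})` is spanned by
`im ∂_p(K_i)` and `∂σ`. Harmonic cycles of `K_i` form a subspace, so the combination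
`z − (α/α*) z*` is still a harmonic cycle of `K_i`, and the coefficient is chosen to kill its
pairing with `∂σ`; hence it is orthogonal to all boundaries of `K_{i+1}`. -/

open Submodule

theorem LinearMap.range_eq_map_orthogonal_sup_span_singleton
    {𝕜 E F : Type*} [RCLike 𝕜] [NormedAddCommGroup E] [InnerProductSpace 𝕜 E]
    [AddCommGroup F] [Module 𝕜 F] (f : E →ₗ[𝕜] F) (v : E) :
    LinearMap.range f = map f (𝕜 ∙ v)ᗮ ⊔ (𝕜 ∙ f v) := by
  rw [LinearMap.range_eq_map, ← sup_orthogonal_of_hasOrthogonalProjection (K := 𝕜 ∙ v),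
    Submodule.map_sup, map_span, Set.image_singleton, sup_comm]

theorem real_inner_sub_div_smul_eq_zero {F : Type*} [NormedAddCommGroup F]
    [InnerProductSpace ℝ F] (z w v : F) (hw : inner ℝ w v ≠ 0) :
    inner ℝ (z - (inner ℝ z v / inner ℝ w v) • w) v = 0 := by
  rw [inner_sub_left, real_inner_smul_left, div_mul_cancel₀ _ hw, sub_self]

theorem stmt18_general
    {C1 C0 Cm : Type*}
    [NormedAddCommGroup C1] [InnerProductSpace ℝ C1]
    [NormedAddCommGroup C0] [InnerProductSpace ℝ C0]
    [NormedAddCommGroup Cm] [InnerProductSpace ℝ Cm]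
    (d1 : C1 →ₗ[ℝ] C0) (d0 : C0 →ₗ[ℝ] Cm)
    (σ : C1)
    (z zstar : C0)
    (hz : z ∈ LinearMap.ker d0 ⊓ (Submodule.map d1 (ℝ ∙ σ)ᗮ)ᗮ)
    (hzstar : zstar ∈ LinearMap.ker d0 ⊓ (Submodule.map d1 (ℝ ∙ σ)ᗮ)ᗮ)
    (α αstar : ℝ)
    (hα : α = (inner ℝ z (d1 σ) : ℝ)) (hαstar : αstar = (inner ℝ zstar (d1 σ) : ℝ))
    (hαstar0 : αstar ≠ 0) :
    z - (α / αstar) • zstar ∈ LinearMap.ker d0 ⊓ (LinearMap.range d1)ᗮ := by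
  subst hα hαstar
  rw [d1.range_eq_map_orthogonal_sup_span_singleton σ, ← inf_orthogonal, ← inf_assoc]
  refine mem_inf.mpr ⟨sub_mem hz (smul_mem _ _ hzstar), ?_⟩
  rw [mem_orthogonal_singleton_iff_inner_left]
  exact real_inner_sub_div_smul_eq_zero z zstar (d1 σ) hαstar0

/-- Let `K_{i+1} = K_i ∪ {σ}` with `σ` a negative `p`-simplex, let
`z, z*` be harmonic `(p−1)`-cycles of `K_i`, and set `α = z(∂σ)`, `α* = z*(∂σ)` (viewing
the cycles as cochains).  If `α* ≠ 0`, then for `α ≠ 0` the cycle `z − (α/α*)·z*` is a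
harmonic `(p−1)`-cycle of `K_{i+1}`.
Model: `C1 = C_p`, `C0 = C_{p-1}`, `Cm = C_{p-2}` are chain spaces of `K_{i+1}` with
boundary maps `d1 = ∂_p`, `d0 = ∂_{p-1}`; `C_p(K_i) = (ℝ∙σ)ᗮ`;
`har_{p-1}(K_i) = ker d0 ⊓ (d1 (ℝ∙σ)ᗮ)ᗮ`, `har_{p-1}(K_{i+1}) = ker d0 ⊓ (range d1)ᗮ`;
`z(∂σ) = ⟪z, d1 σ⟫`.  Negativity of `σ` means `dim H_{p-1}` drops, which is exactly
witnessed by the existence of `z*` with `α* ≠ 0`; hence no separate hypothesis is needed. -/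
theorem stmt18
    {C1 C0 Cm : Type*}
    [NormedAddCommGroup C1] [InnerProductSpace ℝ C1] [FiniteDimensional ℝ C1]
    [NormedAddCommGroup C0] [InnerProductSpace ℝ C0] [FiniteDimensional ℝ C0]
    [NormedAddCommGroup Cm] [InnerProductSpace ℝ Cm] [FiniteDimensional ℝ Cm]
    (d1 : C1 →ₗ[ℝ] C0) (d0 : C0 →ₗ[ℝ] Cm)
    (hdd0 : d0 ∘ₗ d1 = 0)
    (σ : C1) (hσ : σ ≠ 0)
    (z zstar : C0)
    (hz : z ∈ LinearMap.ker d0 ⊓ (Submodule.map d1 (ℝ ∙ σ)ᗮ)ᗮ)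
    (hzstar : zstar ∈ LinearMap.ker d0 ⊓ (Submodule.map d1 (ℝ ∙ σ)ᗮ)ᗮ)
    (α αstar : ℝ)
    (hα : α = (inner ℝ z (d1 σ) : ℝ)) (hαstar : αstar = (inner ℝ zstar (d1 σ) : ℝ))
    (hαstar0 : αstar ≠ 0) (hα0 : α ≠ 0) :
    z - (α / αstar) • zstar ∈ LinearMap.ker d0 ⊓ (LinearMap.range d1)ᗮ :=
  stmt18_general d1 d0 σ z zstar hz hzstar α αstar hα hαstar hαstar0
end
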